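/- Let B be a complex Banach space and let T : B → B be a compact continuous linear operator such that Tⁿ v → 0 as n → ∞ for every v ∈ B. Then there exists N ∈ ℕ such that the operator norm of T^N is strictly smaller than one; consequently there exist constants C > 0 and λ < 1 with ‖Tⁿ‖ ≤ C λⁿ for all n ∈ ℕ. -/

import Mathlib

/-!
By Banach–Steinhaus the powers `Tⁿ` are uniformly bounded, hence equicontinuous, so the pointwise
convergence `Tⁿ v → 0` is uniform on the compact set `closure (T '' closedBall 0 1)`. Since
`‖Tⁿ⁺¹‖ = sup_{‖x‖ ≤ 1} ‖Tⁿ (T x)‖`, this gives `‖Tⁿ⁺¹‖ → 0`. Once `‖T^N‖ < 1`, writing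
`n = N q + r` with `r < N` gives `‖Tⁿ‖ ≤ ‖T^N‖^q · sup_k ‖T^k‖`, a geometric bound.
-/

open scoped Topology
open Filter Metric

theorem EquicontinuousOn.tendstoUniformlyOn_of_tendsto {ι X α : Type*} [TopologicalSpace X]
    [UniformSpace α] {F : ι → X → α} {f : X → α} {K : Set X} {l : Filter ι}
    (hF : EquicontinuousOn F K) (hK : IsCompact K) (h : ∀ x ∈ K, Tendsto (F · x) l (𝓝 (f x))) :
    TendstoUniformlyOn F f l K := by
  have := isCompact_iff_compactSpace.mp hK
  rw [tendstoUniformlyOn_iff_restrict]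
  refine UniformFun.tendsto_iff_tendstoUniformly.mp ?_
  exact ((equicontinuous_restrict_iff _).mpr hF).tendsto_uniformFun_iff_pi _ _ |>.mpr
    (tendsto_pi_nhds.mpr fun x => h x x.2)

theorem exists_norm_le_of_tendsto_apply {𝕜 E F : Type*} [NontriviallyNormedField 𝕜]
    [NormedAddCommGroup E] [NormedSpace 𝕜 E] [CompleteSpace E] [NormedAddCommGroup F]
    [NormedSpace 𝕜 F] {g : ℕ → E →L[𝕜] F} {f : E → F}
    (h : ∀ x, Tendsto (fun n => g n x) atTop (𝓝 (f x))) : ∃ C, ∀ n, ‖g n‖ ≤ C :=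
  banach_steinhaus fun x => (isBounded_iff_forall_norm_le.mp
    (isBounded_range_of_tendsto _ (h x))).imp fun _ hC n => hC _ ⟨n, rfl⟩

theorem tendsto_norm_comp_of_isCompactOperator {𝕜 E F G : Type*} [RCLike 𝕜]
    [NormedAddCommGroup E] [NormedSpace 𝕜 E] [NormedAddCommGroup F] [NormedSpace 𝕜 F]
    [NormedAddCommGroup G] [NormedSpace 𝕜 G] {T : E →L[𝕜] F} (hT : IsCompactOperator T)
    {ι : Type*} {l : Filter ι} {S : ι → F →L[𝕜] G} {M : ℝ} (hS : ∀ i, ‖S i‖ ≤ M)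
    (h : ∀ y, Tendsto (fun i => S i y) l (𝓝 0)) :
    Tendsto (fun i => ‖(S i).comp T‖) l (𝓝 0) := by
  set K := closure (T '' closedBall 0 1)
  have hequi : Equicontinuous (fun i => ⇑(S i)) :=
    ((NormedSpace.equicontinuous_TFAE S).out 5 1).mp (⟨M, hS⟩ : ∃ C, ∀ i, ‖S i‖ ≤ C)
  have hunif : TendstoUniformlyOn (fun i => ⇑(S i)) 0 l K :=
    (hequi.equicontinuousOn K).tendstoUniformlyOn_of_tendsto
      (hT.isCompact_closure_image_closedBall 1) fun y _ => h y
  refine Metric.tendsto_nhds.mpr fun ε hε => ?_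
  filter_upwards [tendstoUniformlyOn_iff.mp hunif (ε / 2) (half_pos hε)] with i hi
  rw [dist_zero_right, norm_norm]
  refine lt_of_le_of_lt (ContinuousLinearMap.opNorm_le_of_unit_norm (half_pos hε).le
    fun x hx => ?_) (half_lt_self hε)
  simpa using (hi (T x) (subset_closure ⟨x, by simp [hx], rfl⟩)).le

theorem norm_pow_mul_le {R : Type*} [NormedRing R] (x y : R) (q : ℕ) :
    ‖x ^ q * y‖ ≤ ‖x‖ ^ q * ‖y‖ := by
  induction q with
  | zero => simp
  | succ q ih =>
    calc ‖x ^ (q + 1) * y‖ = ‖x * (x ^ q * y)‖ := by rw [pow_succ', mul_assoc]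
      _ ≤ ‖x‖ * (‖x‖ ^ q * ‖y‖) := (norm_mul_le _ _).trans (by gcongr)
      _ = ‖x‖ ^ (q + 1) * ‖y‖ := by ring

theorem exists_norm_pow_le_mul_pow_of_norm_pow_lt_one {R : Type*} [NormedRing R] {a : R}
    {M : ℝ} (hM : ∀ n, ‖a ^ n‖ ≤ M) {N : ℕ} (hN0 : N ≠ 0) (hN : ‖a ^ N‖ < 1) :
    ∃ C > (0 : ℝ), ∃ lam : ℝ, lam < 1 ∧ ∀ n : ℕ, ‖a ^ n‖ ≤ C * lam ^ n := by
  set lam := max ‖a ^ N‖ (1 / 2) ^ ((N : ℝ)⁻¹)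
  have hlam0 : 0 < lam := by positivity
  have hlam1 : lam < 1 := Real.rpow_lt_one (by positivity) (max_lt hN (by norm_num)) (by positivity)
  have hlamN : ‖a ^ N‖ ≤ lam ^ N := by
    rw [Real.rpow_inv_natCast_pow (by positivity) hN0]
    exact le_max_left _ _
  have hM0 : 0 ≤ M := (norm_nonneg _).trans (hM 0)
  refine ⟨(M + 1) / lam ^ N, by positivity, lam, hlam1, fun n => ?_⟩
  obtain ⟨q, r, hr, rfl⟩ : ∃ q r, r < N ∧ N * q + r = n :=
    ⟨n / N, n % N, Nat.mod_lt _ (Nat.pos_of_ne_zero hN0), Nat.div_add_mod n N⟩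
  calc ‖a ^ (N * q + r)‖ = ‖(a ^ N) ^ q * a ^ r‖ := by rw [pow_add, pow_mul]
    _ ≤ ‖a ^ N‖ ^ q * ‖a ^ r‖ := norm_pow_mul_le _ _ _
    _ ≤ (lam ^ N) ^ q * (M + 1) := by gcongr; linarith [hM r]
    _ = (M + 1) / lam ^ N * (lam ^ (N * q) * lam ^ N) := by field_simp; ring
    _ ≤ (M + 1) / lam ^ N * lam ^ (N * q + r) := by
      rw [pow_add]
      gcongr (M + 1) / lam ^ N * (_ * ?_)
      exact pow_le_pow_of_le_one hlam0.le hlam1.le hr.le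

theorem stmt2 {B : Type*} [NormedAddCommGroup B] [NormedSpace ℂ B] [CompleteSpace B]
    (T : B →L[ℂ] B) (hT : IsCompactOperator T)
    (h : ∀ v : B, Filter.Tendsto (fun n : ℕ => (T ^ n) v) Filter.atTop (𝓝 0)) :
    (∃ N : ℕ, ‖T ^ N‖ < 1) ∧
      ∃ C > (0 : ℝ), ∃ lam : ℝ, lam < 1 ∧ ∀ n : ℕ, ‖T ^ n‖ ≤ C * lam ^ n := by
  obtain ⟨M, hM⟩ := exists_norm_le_of_tendsto_apply h
  have hsucc : Tendsto (fun n : ℕ => ‖T ^ (n + 1)‖) atTop (𝓝 0) := by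
    simpa only [pow_succ, ContinuousLinearMap.mul_def] using
      tendsto_norm_comp_of_isCompactOperator hT hM h
  obtain ⟨n, hn⟩ := (hsucc.eventually (gt_mem_nhds one_pos)).exists
  exact ⟨⟨n + 1, hn⟩, exists_norm_pow_le_mul_pow_of_norm_pow_lt_one hM n.succ_ne_zero hn⟩
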